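/- With ℋ_k as above, for all m ∈ ℬ^d and k ≥ d+1, |ℋ_k(m) − (k/2^{d+1}) Σ_{s ∈ ℬ^d} ⟨Xξ(s),ξ(s)⟩| ≤ C d ‖X‖, where C depends only on n. -/

import Mathlib

/-- The shift m|b on histories: drop the first symbol, append b. -/
def shift {d : ℕ} (m : Fin d → Bool) (b : Bool) : Fin d → Bool :=
  fun i => if h : (i : ℕ) + 1 < d then m ⟨(i : ℕ) + 1, h⟩ else b

/-- m|s : append the symbols of s one at a time to the history m. -/
def appendWord {d : ℕ} : {ℓ : ℕ} → (Fin d → Bool) → (Fin ℓ → Bool) → (Fin d → Bool)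
  | 0, m, _ => m
  | _+1, m, s => appendWord (shift m (s 0)) (fun i => s i.succ)

/-- The quadratic form ⟨Xv, v⟩. -/
noncomputable def quadip {n : ℕ} (X : Matrix (Fin n) (Fin n) ℝ) (v : Fin n → ℝ) : ℝ :=
  ∑ i, X.mulVec v i * v i

/-- ℋ_k(m), defined by ℋ_0 = 0 and
ℋ_k(m) = ½⟨Xξ(m),ξ(m)⟩ + ½(ℋ_{k-1}(m₊) + ℋ_{k-1}(m₋)). -/
noncomputable def H {n d : ℕ} (X : Matrix (Fin n) (Fin n) ℝ)
    (ξ : (Fin d → Bool) → Fin n → ℝ) : ℕ → (Fin d → Bool) → ℝ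
  | 0, _ => 0
  | k+1, m => (1/2) * quadip X (ξ m)
      + (1/2) * (H X ξ k (shift m true) + H X ξ k (shift m false))

/-- The Euclidean operator norm of a matrix. -/
noncomputable def opNorm {n : ℕ} (X : Matrix (Fin n) (Fin n) ℝ) : ℝ :=
  ‖(Matrix.toEuclideanCLM (𝕜 := ℝ) X : EuclideanSpace ℝ (Fin n) →L[ℝ] EuclideanSpace ℝ (Fin n))‖

/-! The increments `H (k + 1) - H k` are the iterates `shiftMean^[k] (Q / 2)` of the averaging
operator below, with `Q m = ⟨X ξ(m), ξ(m)⟩`. `shiftMean^[k] g m` only sees the coordinates of `m`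
from position `k` on, so it is constant once `k ≥ d`; and `shiftMean` preserves `∑ m, g m`,
because every history has exactly two preimages `(m, b)` under `shift`. Hence for `k ≥ d` the
increment equals the mean of `Q / 2`, and only the first `d` increments, each bounded by
`2 n ‖X‖`, contribute to the error. -/

section shiftMean

variable {d : ℕ}

noncomputable def shiftMean (g : (Fin d → Bool) → ℝ) (m : Fin d → Bool) : ℝ :=
  (g (shift m true) + g (shift m false)) / 2

lemma shift_cons (a : Bool) (t : Fin d → Bool) (b : Bool) :
    shift (Fin.cons a t : Fin (d + 1) → Bool) b = Fin.snoc t b := by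
  funext i
  by_cases hi : (i : ℕ) < d
  · have : (⟨i + 1, by omega⟩ : Fin (d + 1)) = (Fin.castLT i hi).succ := rfl
    simp [shift, Fin.snoc, hi, this]
  · simp [shift, Fin.snoc, hi]

lemma shift_fin_zero (m : Fin 0 → Bool) (b : Bool) : shift m b = m :=
  Subsingleton.elim _ _

lemma sum_shiftMean (g : (Fin d → Bool) → ℝ) :
    ∑ m, shiftMean g m = ∑ m, g m := by
  simp only [shiftMean, ← Finset.sum_div, Finset.sum_add_distrib]
  cases d with
  | zero => simp [shift_fin_zero]
  | succ d =>
    have hsum (b : Bool) : ∑ m : Fin (d + 1) → Bool, g (shift m b) =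
        2 * ∑ t : Fin d → Bool, g (Fin.snoc t b) := by
      rw [← Fintype.sum_equiv (Fin.consEquiv fun _ => Bool)
        (fun p => g (shift (Fin.cons p.1 p.2) b)) _ (fun _ => rfl)]
      simp only [Fintype.sum_prod_type, shift_cons, Fintype.sum_bool, two_mul]
    have hsnoc : ∑ m, g m = ∑ t : Fin d → Bool, (g (Fin.snoc t true) + g (Fin.snoc t false)) := by
      rw [← Fintype.sum_equiv (Fin.snocEquiv fun _ => Bool)
        (fun p => g (Fin.snoc p.2 p.1)) _ (fun _ => rfl)]
      simp only [Fintype.sum_prod_type, Fintype.sum_bool, Finset.sum_add_distrib]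
    rw [hsum, hsum, hsnoc, Finset.sum_add_distrib]
    ring

lemma sum_shiftMean_iterate (g : (Fin d → Bool) → ℝ) (k : ℕ) :
    ∑ m, shiftMean^[k] g m = ∑ m, g m := by
  induction k with
  | zero => rfl
  | succ k ih => rw [Function.iterate_succ_apply', sum_shiftMean, ih]

lemma shiftMean_iterate_congr (g : (Fin d → Bool) → ℝ) (k : ℕ) {m m' : Fin d → Bool}
    (h : ∀ i : Fin d, k ≤ i → m i = m' i) : shiftMean^[k] g m = shiftMean^[k] g m' := by
  induction k generalizing m m' with
  | zero => rw [funext fun i => h i (Nat.zero_le _)]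
  | succ k ih =>
    have hshift (b : Bool) : shiftMean^[k] g (shift m b) = shiftMean^[k] g (shift m' b) :=
      ih fun i hi => by
        unfold shift
        split_ifs
        · exact h _ (Nat.succ_le_succ hi)
        · rfl
    simp only [Function.iterate_succ_apply', shiftMean, hshift]

lemma shiftMean_iterate_of_le (g : (Fin d → Bool) → ℝ) {k : ℕ} (hk : d ≤ k)
    (m : Fin d → Bool) : shiftMean^[k] g m = (∑ m', g m') / 2 ^ d := by
  have hconst (m' : Fin d → Bool) : shiftMean^[k] g m' = shiftMean^[k] g m :=
    shiftMean_iterate_congr g k fun i hi => absurd (i.isLt.trans_le (hk.trans hi)) (lt_irrefl _)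
  rw [← sum_shiftMean_iterate g k, Finset.sum_congr rfl fun m' _ => hconst m']
  simp

lemma abs_shiftMean_iterate_le {g : (Fin d → Bool) → ℝ} {B : ℝ} (hg : ∀ m, |g m| ≤ B)
    (k : ℕ) (m : Fin d → Bool) : |shiftMean^[k] g m| ≤ B := by
  induction k generalizing m with
  | zero => exact hg m
  | succ k ih =>
    rw [Function.iterate_succ_apply', shiftMean, abs_div, abs_two, div_le_iff₀ two_pos]
    linarith [abs_add_le (shiftMean^[k] g (shift m true)) (shiftMean^[k] g (shift m false)),
      ih (shift m true), ih (shift m false)]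

end shiftMean

section H

variable {n d : ℕ} (X : Matrix (Fin n) (Fin n) ℝ) (ξ : (Fin d → Bool) → Fin n → ℝ)

lemma H_succ_sub_H (k : ℕ) (m : Fin d → Bool) :
    H X ξ (k + 1) m - H X ξ k m = shiftMean^[k] (fun m => quadip X (ξ m) / 2) m := by
  induction k generalizing m with
  | zero =>
    simp only [H, Function.iterate_zero, id]
    ring
  | succ k ih =>
    rw [Function.iterate_succ_apply', shiftMean, ← ih, ← ih]
    simp only [H]
    ring

lemma H_eq_sum_range (k : ℕ) (m : Fin d → Bool) :
    H X ξ k m = ∑ j ∈ Finset.range k, shiftMean^[j] (fun m => quadip X (ξ m) / 2) m := by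
  rw [Finset.sum_congr rfl fun j _ => (H_succ_sub_H X ξ j m).symm,
    Finset.sum_range_sub (fun j => H X ξ j m), H, sub_zero]

end H

lemma abs_quadip_le {n : ℕ} (X : Matrix (Fin n) (Fin n) ℝ) (v : Fin n → ℝ) :
    |quadip X v| ≤ opNorm X * ‖WithLp.toLp 2 v‖ ^ 2 := by
  have hinner : quadip X v = inner ℝ (Matrix.toEuclideanCLM (𝕜 := ℝ) X (WithLp.toLp 2 v))
      (WithLp.toLp 2 v) := by
    rw [Matrix.toEuclideanCLM_toLp, EuclideanSpace.inner_eq_star_dotProduct]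
    simp [quadip, dotProduct, mul_comm]
  rw [hinner, sq, ← mul_assoc]
  exact (abs_real_inner_le_norm _ _).trans
    (mul_le_mul_of_nonneg_right (ContinuousLinearMap.le_opNorm _ _) (norm_nonneg _))

lemma abs_sum_range_sub_le {a : ℕ → ℝ} {A B : ℝ} {d k : ℕ} (hdk : d ≤ k)
    (hA : ∀ j, d ≤ j → a j = A) (hB : ∀ j, |a j - A| ≤ B) :
    |∑ j ∈ Finset.range k, a j - k * A| ≤ d * B := by
  have htail : ∑ j ∈ Finset.range k, (a j - A) = ∑ j ∈ Finset.range d, (a j - A) :=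
    (Finset.sum_subset (Finset.range_subset_range.mpr hdk) fun j _ hj => by
      rw [hA j (by simpa using hj), sub_self]).symm
  have hkA : (k : ℝ) * A = ∑ _j ∈ Finset.range k, A := by simp
  rw [hkA, ← Finset.sum_sub_distrib, htail]
  simpa using (Finset.abs_sum_le_sum_abs _ (Finset.range d)).trans
    (Finset.sum_le_card_nsmul _ _ _ fun j _ => hB j)

/-- for any ξ with |ξ(m)| ≤ 2√n, and all k ≥ d+1,
|ℋ_k(m) − (k/2^{d+1}) Σ_{s ∈ ℬ^d} ⟨Xξ(s),ξ(s)⟩| ≤ C d ‖X‖, with C depending only on n. -/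
theorem stmt6 (n : ℕ) :
    ∃ C : ℝ, 0 < C ∧
      ∀ (d : ℕ) (X : Matrix (Fin n) (Fin n) ℝ), X.IsSymm →
      ∀ ξ : (Fin d → Bool) → Fin n → ℝ,
        (∀ m, Real.sqrt (∑ i, (ξ m i)^2) ≤ 2 * Real.sqrt n) →
      ∀ k : ℕ, d + 1 ≤ k → ∀ m : Fin d → Bool,
        |H X ξ k m - ((k : ℝ) / 2^(d+1)) * ∑ s : Fin d → Bool, quadip X (ξ s)|
          ≤ C * d * opNorm X := by
  refine ⟨4 * n + 1, by positivity, fun d X _ ξ hξ k hk m => ?_⟩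
  set g : (Fin d → Bool) → ℝ := fun m => quadip X (ξ m) / 2
  set B : ℝ := 2 * n * opNorm X
  have hg (m : Fin d → Bool) : |g m| ≤ B := by
    have hnorm : ‖WithLp.toLp 2 (ξ m)‖ ^ 2 ≤ 4 * n := by
      rw [EuclideanSpace.norm_eq]
      simp only [Real.norm_eq_abs, sq_abs]
      nlinarith [hξ m, Real.sqrt_nonneg (∑ i, ξ m i ^ 2), Real.sq_sqrt (n.cast_nonneg (α := ℝ))]
    have := (abs_quadip_le X (ξ m)).trans
      (mul_le_mul_of_nonneg_left hnorm (norm_nonneg _ : (0 : ℝ) ≤ opNorm X))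
    rw [abs_div, abs_two]
    linarith
  set A : ℝ := (∑ m', g m') / 2 ^ d
  have hA : |A| ≤ B := by
    simpa only [A, shiftMean_iterate_of_le g le_rfl m] using abs_shiftMean_iterate_le hg d m
  have hmean : (k : ℝ) / 2 ^ (d + 1) * ∑ s, quadip X (ξ s) = k * A := by
    simp only [A, g, ← Finset.sum_div, pow_succ]
    ring
  rw [H_eq_sum_range, hmean]
  calc _ ≤ d * (2 * B) := abs_sum_range_sub_le (by omega)
        (fun j hj => shiftMean_iterate_of_le g hj m)
        (fun j => (abs_sub _ _).trans (by linarith [abs_shiftMean_iterate_le hg j m]))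
    _ ≤ (4 * n + 1) * d * opNorm X := by
        have : 0 ≤ (d : ℝ) * opNorm X := mul_nonneg d.cast_nonneg (norm_nonneg _)
        nlinarith
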